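/- arXiv:1803.04942 — 2 statements merged into one kernel-verified Lean document; each statement's English description precedes it below -/
import Mathlib

section
/- For the sl₂-triple (ξ,h,η) constructed from the Borel subalgebra 𝔟₊ (with ξ = Σ_{α∈Π} e_{−α}, η = Σ_{α∈Π} c_α e_α, and h the element of 𝔥 with α(h) = −2 for all α ∈ Π), one has ker(ad_η) ⊆ 𝔟₊. -/
open Module

/-- The root space `𝔤_α = {x ∈ 𝔤 : [y, x] = α(y) • x for all y ∈ 𝔥}`. -/
def eigenSpace {L : Type*} [LieRing L] [LieAlgebra ℂ L]
    (H : LieSubalgebra ℂ L) (α : Module.Dual ℂ H) : Submodule ℂ L where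
  carrier := {x : L | ∀ y : H, ⁅(y : H), x⁆ = α y • x}
  add_mem' := fun {x} {y} hx hy => by intro z; rw [lie_add, hx z, hy z, smul_add]
  zero_mem' := by intro z; rw [lie_zero, smul_zero]
  smul_mem' := fun c {x} hx => by intro z; rw [lie_smul, hx z, smul_comm]

/-- The set of roots of `𝔤` relative to the Cartan subalgebra `𝔥`. -/
def rootSet {L : Type*} [LieRing L] [LieAlgebra ℂ L] (H : LieSubalgebra ℂ L) :
    Set (Module.Dual ℂ H) :=
  {α : Module.Dual ℂ H | α ≠ 0 ∧ eigenSpace H α ≠ ⊥}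

/-- The Borel subalgebra `𝔟₊ = 𝔥 ⊕ ⨁_{α ∈ Δ₊} 𝔤_α`, as a subspace of `𝔤`. -/
def borelPlus {L : Type*} [LieRing L] [LieAlgebra ℂ L]
    (H : LieSubalgebra ℂ L) (Δp : Finset (Module.Dual ℂ H)) : Submodule ℂ L :=
  H.toSubmodule ⊔ ⨆ α ∈ Δp, eigenSpace H α

section Aux

variable {R M ι : Type*} [Ring R] [AddCommGroup M] [Module R M]

lemma aux_exists_sum_of_mem_biSup (p : ι → Submodule R M) (s : Finset ι) {x : M}
    (hx : x ∈ ⨆ i ∈ s, p i) :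
    ∃ v : ι → M, (∀ i ∈ s, v i ∈ p i) ∧ x = ∑ i ∈ s, v i := by
  classical
  induction s using Finset.induction_on generalizing x with
  | empty =>
    simp only [Finset.notMem_empty, iSup_false, iSup_bot, Submodule.mem_bot] at hx
    exact ⟨0, by simp, by simp [hx]⟩
  | @insert a s ha ih =>
    rw [Finset.iSup_insert] at hx
    obtain ⟨y, hy, z, hz, rfl⟩ := Submodule.mem_sup.mp hx
    obtain ⟨v, hv, rfl⟩ := ih hz
    refine ⟨Function.update v a y, ?_, ?_⟩
    · intro i hi
      rcases Finset.mem_insert.mp hi with rfl | hi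
      · simpa using hy
      · rw [Function.update_of_ne (ne_of_mem_of_not_mem hi ha)]
        exact hv i hi
    · rw [Finset.sum_insert ha, Function.update_self]
      congr 1
      exact Finset.sum_congr rfl fun i hi =>
        (Function.update_of_ne (ne_of_mem_of_not_mem hi ha) _ _).symm

lemma aux_eq_zero_of_indep_sum_eq_zero (p : ι → Submodule R M) (hp : iSupIndep p)
    (s : Finset ι) (v : ι → M) (hv : ∀ i ∈ s, v i ∈ p i)
    (hsum : ∑ i ∈ s, v i = 0) : ∀ i ∈ s, v i = 0 := by
  classical
  induction s using Finset.induction_on with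
  | empty => simp
  | @insert a s ha ih =>
    rw [Finset.sum_insert ha] at hsum
    have hva : v a = -∑ i ∈ s, v i := eq_neg_of_add_eq_zero_left hsum
    have hmem : v a ∈ ⨆ i ∈ (s : Set ι), p i := by
      rw [hva]
      exact neg_mem (Submodule.sum_mem _ fun i hi =>
        (le_iSup₂ (f := fun i (_ : i ∈ (s : Set ι)) => p i) i hi)
          (hv i (Finset.mem_insert_of_mem (Finset.mem_coe.mp hi))))
    have hzero : v a = 0 :=
      Submodule.disjoint_def.mp (hp.disjoint_biSup (by simpa using ha)) _
        (hv a (Finset.mem_insert_self a s)) hmem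
    rw [hva] at hsum
    intro i hi
    rcases Finset.mem_insert.mp hi with rfl | hi
    · exact hzero
    · refine ih (fun j hj => hv j (Finset.mem_insert_of_mem hj)) ?_ i hi
      have := hzero
      rw [hva, neg_eq_zero] at this
      exact this

lemma aux_lie_sum {L ι : Type*} [LieRing L] (x : L) (s : Finset ι) (f : ι → L) :
    ⁅x, ∑ i ∈ s, f i⁆ = ∑ i ∈ s, ⁅x, f i⁆ := by
  classical
  induction s using Finset.induction_on with
  | empty => simp
  | @insert a s ha ih => rw [Finset.sum_insert ha, Finset.sum_insert ha, lie_add, ih]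

end Aux

/-- For the `sl₂`-triple `(ξ, h, η)` constructed from the Borel subalgebra
`𝔟₊` (with `ξ = Σ_{α ∈ Π} e₋_α`, `η = Σ_{α ∈ Π} c_α • e_α`, and `h` the element of `𝔥` with
`α h = -2` for all simple roots `α ∈ Π`, the simple roots being denoted `Δs` below), one has
`ker (ad η) ⊆ 𝔟₊`. -/
theorem ker_ad_eta_le_borelPlus
    {L : Type*} [LieRing L] [LieAlgebra ℂ L] [FiniteDimensional ℂ L]
    [LieAlgebra.IsSemisimple ℂ L]
    (H : LieSubalgebra ℂ L) (hH : H.IsCartanSubalgebra)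
    (Δp Δs : Finset (Module.Dual ℂ H)) (hΔs : Δs ⊆ Δp)
    (hroots : rootSet H = ↑Δp ∪ (fun α => -α) '' ↑Δp)
    (hdecomp : H.toSubmodule ⊔ ⨆ β ∈ rootSet H, eigenSpace H β = ⊤)
    (hsimple : ∀ β ∈ Δp, ∃ k : Module.Dual ℂ H → ℕ, β = ∑ α ∈ Δs, k α • α)
    (ePlus eMinus : Module.Dual ℂ H → L)
    (hplus : ∀ α ∈ Δs, ePlus α ∈ eigenSpace H α)
    (hminus : ∀ α ∈ Δs, eMinus α ∈ eigenSpace H (-α))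
    (coroot : Module.Dual ℂ H → H)
    (hcoroot : ∀ α ∈ Δs, α (coroot α) = 2)
    (hbracket : ∀ α ∈ Δs, ⁅ePlus α, eMinus α⁆ = (coroot α : L))
    (h : H) (hh : ∀ α ∈ Δs, α h = -2)
    (habel : ∀ y : H, ⁅(h : L), (y : L)⁆ = 0)
    (c : Module.Dual ℂ H → ℂ)
    (hc : -(h : L) = ∑ α ∈ Δs, c α • (coroot α : L))
    (ξ η : L) (hξ : ξ = ∑ α ∈ Δs, eMinus α) (hη : η = ∑ α ∈ Δs, c α • ePlus α)
    (htriple : ⁅(h : L), ξ⁆ = (2 : ℂ) • ξ ∧ ⁅(h : L), η⁆ = (-2 : ℂ) • η ∧ ⁅ξ, η⁆ = (h : L)) :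
    LinearMap.ker (LieAlgebra.ad ℂ L η) ≤ borelPlus H Δp := by
  classical
  intro x hx
  rw [LinearMap.mem_ker, LieAlgebra.ad_apply] at hx
  rcases Finset.eq_empty_or_nonempty Δs with hΔse | ⟨α₀, hα₀⟩
  · -- degenerate case : no simple roots
    have hΔpe : Δp = ∅ := by
      rw [Finset.eq_empty_iff_forall_notMem]
      intro β hβ
      have hβr : β ∈ rootSet H := by rw [hroots]; exact Or.inl (Finset.mem_coe.mpr hβ)
      obtain ⟨k, hk⟩ := hsimple β hβ
      rw [hΔse, Finset.sum_empty] at hk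
      exact hβr.1 hk
    have hre : rootSet H = ∅ := by rw [hroots, hΔpe]; simp
    rw [hre] at hdecomp
    simp only [Set.mem_empty_iff_false, iSup_false, iSup_bot, sup_bot_eq] at hdecomp
    exact (le_sup_left : H.toSubmodule ≤ borelPlus H Δp) (by rw [hdecomp]; trivial)
  -- main case
  have hcast : ∀ a b : ℕ, (a : ℂ) = -(b : ℂ) → a = 0 ∧ b = 0 := by
    intro a b hab
    have h2 : ((a + b : ℕ) : ℂ) = 0 := by push_cast; linear_combination hab
    have h3 := Nat.cast_eq_zero.mp h2
    omega
  set A : Module.End ℂ L := LieAlgebra.ad ℂ L (h : L) with hA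
  have hhne : (h : L) ≠ 0 := by
    intro h0
    have h0' : h = 0 := by exact_mod_cast h0
    have := hh α₀ hα₀
    rw [h0', map_zero] at this
    norm_num at this
  have t : IsSl2Triple (-(h : L)) η ξ :=
    { h_ne_zero := neg_ne_zero.mpr hhne
      lie_e_f := by rw [← lie_skew, htriple.2.2]
      lie_h_e_nsmul := by rw [neg_lie, htriple.2.1]; module
      lie_h_f_nsmul := by rw [neg_lie, htriple.1]; module }
  have heigH : ∀ y ∈ H.toSubmodule, y ∈ A.eigenspace 0 := by
    intro y hy
    rw [Module.End.mem_eigenspace_iff, zero_smul, hA, LieAlgebra.ad_apply]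
    exact habel ⟨y, hy⟩
  have heigE : ∀ β : Module.Dual ℂ H, ∀ z ∈ eigenSpace H β, z ∈ A.eigenspace (β h) := by
    intro β z hz
    rw [Module.End.mem_eigenspace_iff, hA, LieAlgebra.ad_apply]
    exact hz h
  have hmapη : ∀ (μ : ℂ) (v : L), v ∈ A.eigenspace μ → ⁅η, v⁆ ∈ A.eigenspace (μ - 2) := by
    intro μ v hv
    rw [Module.End.mem_eigenspace_iff, hA, LieAlgebra.ad_apply] at hv ⊢
    rw [leibniz_lie, htriple.2.1, hv, smul_lie, lie_smul]
    module
  have hkill : ∀ (μ : ℂ) (v : L), v ∈ A.eigenspace μ → ⁅η, v⁆ = 0 →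
      (∀ n : ℕ, μ ≠ -(n : ℂ)) → v = 0 := by
    intro μ v hv hηv hμ
    by_contra hv0
    have P : t.HasPrimitiveVectorWith v (-μ) :=
      { ne_zero := hv0
        lie_h := by
          rw [Module.End.mem_eigenspace_iff, hA, LieAlgebra.ad_apply] at hv
          rw [neg_lie, hv, neg_smul]
        lie_e := hηv }
    obtain ⟨n, hn⟩ := P.exists_nat
    exact hμ n (neg_eq_iff_eq_neg.mp hn)
  have hval_p : ∀ β ∈ Δp, ∃ m : ℕ, m ≠ 0 ∧ β h = -((2 * m : ℕ) : ℂ) := by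
    intro β hβ
    obtain ⟨k, hk⟩ := hsimple β hβ
    refine ⟨∑ α ∈ Δs, k α, ?_, ?_⟩
    · intro h0
      have hβr : β ∈ rootSet H := by rw [hroots]; exact Or.inl (Finset.mem_coe.mpr hβ)
      apply hβr.1
      rw [hk]
      refine Finset.sum_eq_zero fun α hα => ?_
      rw [(Finset.sum_eq_zero_iff.mp h0) α hα, zero_smul]
    · rw [hk]
      have h1 : (∑ α ∈ Δs, k α • α) h = ∑ α ∈ Δs, (k α : ℂ) * (α h) := by
        rw [LinearMap.sum_apply]
        exact Finset.sum_congr rfl fun α hα => by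
          rw [LinearMap.smul_apply]
          simp [nsmul_eq_mul]
      rw [h1, Finset.sum_congr rfl fun α hα => by rw [hh α hα]]
      push_cast
      rw [← Finset.sum_mul]
      ring
  set g : Module.Dual ℂ H → ℂ := fun β => β h with hg
  set Δm := Δp.image (fun γ => -γ) with hΔm
  have hval_m : ∀ β ∈ Δm, ∃ m : ℕ, m ≠ 0 ∧ β h = ((2 * m : ℕ) : ℂ) := by
    intro β hβ
    obtain ⟨γ, hγ, rfl⟩ := Finset.mem_image.mp hβ
    obtain ⟨m, hm, hval⟩ := hval_p γ hγ
    refine ⟨m, hm, ?_⟩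
    rw [LinearMap.neg_apply, hval, neg_neg]
  have hdisj : Disjoint Δp Δm := by
    rw [Finset.disjoint_left]
    intro β hβp hβm
    obtain ⟨k, hk, hvk⟩ := hval_p β hβp
    obtain ⟨m, hm, hvm⟩ := hval_m β hβm
    obtain ⟨h1, _⟩ := hcast (2 * m) (2 * k) (by rw [← hvm, hvk])
    omega
  -- decompose x
  have hsets : rootSet H = ↑(Δp ∪ Δm) := by
    rw [hroots, hΔm]
    simp [Finset.coe_union, Finset.coe_image]
  have hdecomp' : H.toSubmodule ⊔
      ((⨆ β ∈ Δp, eigenSpace H β) ⊔ ⨆ β ∈ Δm, eigenSpace H β) = ⊤ := by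
    rw [← hdecomp, hsets]
    congr 1
    rw [← Finset.iSup_union]
    simp only [Finset.mem_coe]
  have hx' : x ∈ H.toSubmodule ⊔
      ((⨆ β ∈ Δp, eigenSpace H β) ⊔ ⨆ β ∈ Δm, eigenSpace H β) := by
    rw [hdecomp']; trivial
  obtain ⟨xH, hxH, y, hy, hxsum⟩ := Submodule.mem_sup.mp hx'
  obtain ⟨yp, hyp, ym, hym, hysum⟩ := Submodule.mem_sup.mp hy
  obtain ⟨zp, hzp, hypsum⟩ := aux_exists_sum_of_mem_biSup _ Δp hyp
  obtain ⟨zm, hzm, hymsum⟩ := aux_exists_sum_of_mem_biSup _ Δm hym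
  set z : Module.Dual ℂ H → L := fun β => if β ∈ Δp then zp β else zm β with hz
  have hzmem : ∀ β ∈ Δp ∪ Δm, z β ∈ eigenSpace H β := by
    intro β hβ
    show (if β ∈ Δp then zp β else zm β) ∈ eigenSpace H β
    rcases Finset.mem_union.mp hβ with hβ | hβ
    · rw [if_pos hβ]; exact hzp β hβ
    · rw [if_neg (Finset.disjoint_right.mp hdisj hβ)]; exact hzm β hβ
  have hzp_eq : ∀ β ∈ Δp, z β = zp β := fun β hβ => by rw [hz]; simp [hβ]
  have hzm_eq : ∀ β ∈ Δm, z β = zm β := fun β hβ => by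
    rw [hz]; simp [Finset.disjoint_right.mp hdisj hβ]
  have hxz : x = xH + ∑ β ∈ Δp ∪ Δm, z β := by
    rw [Finset.sum_union hdisj, Finset.sum_congr rfl hzp_eq,
      Finset.sum_congr rfl hzm_eq, ← hypsum, ← hymsum, ← hxsum, ← hysum]
  -- group the image of `⁅η, ·⁆` by eigenvalue
  set s : Finset (Module.Dual ℂ H) := Δp ∪ Δm with hs
  set T : Finset ℂ := insert (-2 : ℂ) (s.image (fun β => g β - 2)) with hT
  set w : ℂ → L := fun μ =>
    (if μ = -2 then ⁅η, xH⁆ else 0) + ∑ β ∈ s with g β - 2 = μ, ⁅η, z β⁆ with hw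
  have hwmem : ∀ μ : ℂ, w μ ∈ A.eigenspace μ := by
    intro μ
    rw [hw]
    refine Submodule.add_mem _ ?_ (Submodule.sum_mem _ fun β hβ => ?_)
    · split_ifs with hμ
      · subst hμ
        have := hmapη 0 xH (heigH xH hxH)
        simpa using this
      · exact Submodule.zero_mem _
    · obtain ⟨hβs, hβeq⟩ := Finset.mem_filter.mp hβ
      rw [← hβeq]
      exact hmapη (g β) (z β) (heigE β (z β) (hzmem β hβs))
  have hwsum : ∑ μ ∈ T, w μ = 0 := by
    rw [hw]
    simp only []
    rw [Finset.sum_add_distrib, Finset.sum_ite_eq' T (-2 : ℂ) (fun _ => ⁅η, xH⁆),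
      if_pos (Finset.mem_insert_self _ _),
      Finset.sum_fiberwise_of_maps_to
        (fun β hβ => Finset.mem_insert_of_mem (Finset.mem_image_of_mem _ hβ)),
      ← aux_lie_sum, ← lie_add, ← hxz, hx]
  have hwzero : ∀ μ ∈ T, w μ = 0 :=
    aux_eq_zero_of_indep_sum_eq_zero A.eigenspace A.eigenspaces_iSupIndep T w
      (fun μ _ => hwmem μ) hwsum
  -- kill the fibers coming from negative roots
  have hfiber : ∀ β₀ ∈ Δm, ∑ γ ∈ Δm with g γ = g β₀, z γ = 0 := by
    intro β₀ hβ₀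
    obtain ⟨m, hm, hvβ₀⟩ := hval_m β₀ hβ₀
    have hμT : g β₀ - 2 ∈ T :=
      Finset.mem_insert_of_mem
        (Finset.mem_image_of_mem _ (Finset.mem_union_right _ hβ₀))
    have hwμ := hwzero _ hμT
    have hμne : g β₀ - 2 ≠ -2 := by
      intro hcon
      have hg0 : g β₀ = 0 := by linear_combination hcon
      obtain ⟨h1, _⟩ := hcast (2 * m) 0 (by rw [← hvβ₀]; show g β₀ = -((0:ℕ):ℂ); rw [hg0]; simp)
      omega
    rw [hw] at hwμ
    simp only [if_neg hμne, zero_add] at hwμ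
    have hfilter_eq : s.filter (fun β => g β - 2 = g β₀ - 2) =
        Δm.filter (fun β => g β = g β₀) := by
      ext γ
      simp only [Finset.mem_filter, hs, Finset.mem_union]
      constructor
      · rintro ⟨hγs, hγeq⟩
        have hγval : g γ = g β₀ := by linear_combination hγeq
        refine ⟨?_, hγval⟩
        rcases hγs with hγp | hγm
        · exfalso
          obtain ⟨k, hk, hgk⟩ := hval_p γ hγp
          obtain ⟨h1, _⟩ := hcast (2 * m) (2 * k) (by rw [← hvβ₀]; show g β₀ = -((2*k:ℕ):ℂ); rw [← hγval]; exact hgk)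
          omega
        · exact hγm
      · rintro ⟨hγm, hγval⟩
        exact ⟨Or.inr hγm, by rw [hγval]⟩
    rw [hfilter_eq] at hwμ
    have hvmem : (∑ γ ∈ Δm with g γ = g β₀, z γ) ∈ A.eigenspace (g β₀) :=
      Submodule.sum_mem _ fun γ hγ => by
        obtain ⟨hγm, hγval⟩ := Finset.mem_filter.mp hγ
        rw [← hγval]
        exact heigE γ (z γ) (hzmem γ (Finset.mem_union_right _ hγm))
    refine hkill (g β₀) _ hvmem (by rw [aux_lie_sum]; exact hwμ) ?_
    intro n hn
    obtain ⟨h1, _⟩ := hcast (2 * m) n (by rw [← hvβ₀]; exact hn)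
    omega
  have hymzero : ∑ β ∈ Δm, z β = 0 := by
    rw [← Finset.sum_fiberwise_of_maps_to (g := g) (t := Δm.image g)
      (fun β hβ => Finset.mem_image_of_mem g hβ) z]
    refine Finset.sum_eq_zero fun μ' hμ' => ?_
    obtain ⟨β₀, hβ₀, rfl⟩ := Finset.mem_image.mp hμ'
    exact hfiber β₀ hβ₀
  have hxfinal : x = xH + ∑ β ∈ Δp, z β := by
    rw [hxz, hs, Finset.sum_union hdisj, hymzero, add_zero]
  rw [hxfinal]
  refine Submodule.add_mem _ (Submodule.mem_sup_left hxH)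
    (Submodule.mem_sup_right (Submodule.sum_mem _ fun β hβ => ?_))
  exact (le_iSup₂ (f := fun β (_ : β ∈ Δp) => eigenSpace H β) β hβ)
    (hzp_eq β hβ ▸ hzp β hβ)
end

section
/- Let L be a finite-dimensional Lie algebra over a field of characteristic zero and let (ξ,h,η) be an sl₂-triple in L. If y ∈ ker(ad_η) is a nonzero eigenvector of ad_h with eigenvalue μ, then μ is a non-positive integer (i.e. μ is the image in the field of an integer k ≤ 0). -/
/-- Let `L` be a finite-dimensional Lie algebra over a field of characteristic
zero and let `(ξ, h, η)` be an `sl₂`-triple in `L`, i.e. `[h,ξ] = 2ξ`, `[h,η] = -2η` and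
`[ξ,η] = h`.  If `y ∈ ker (ad η)` is a nonzero eigenvector of `ad h` with eigenvalue `μ`, then
`μ` is a non-positive integer. -/
theorem slTwoTriple_ker_ad_eigenvalue_nonpos
    {K : Type*} [Field K] [CharZero K]
    {L : Type*} [LieRing L] [LieAlgebra K L] [FiniteDimensional K L]
    (ξ h η : L)
    (h₁ : ⁅h, ξ⁆ = (2 : K) • ξ) (h₂ : ⁅h, η⁆ = (-2 : K) • η) (h₃ : ⁅ξ, η⁆ = h)
    (y : L) (hy : y ≠ 0) (hker : ⁅η, y⁆ = 0)
    (μ : K) (heig : ⁅h, y⁆ = μ • y) :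
    ∃ k : ℤ, k ≤ 0 ∧ μ = (k : K) := by
  by_cases hh : h = 0
  · refine ⟨0, le_refl 0, ?_⟩
    have : μ • y = 0 := by rw [← heig, hh, zero_lie]
    have hμ : μ = 0 := by
      rcases smul_eq_zero.mp this with h' | h'
      · exact h'
      · exact absurd h' hy
    simpa using hμ
  have t : IsSl2Triple h ξ η :=
    { h_ne_zero := hh
      lie_e_f := h₃
      lie_h_e_nsmul := by rw [h₁]; module
      lie_h_f_nsmul := by rw [h₂]; module }
  have P : (t.symm).HasPrimitiveVectorWith y (-μ) :=
    { ne_zero := hy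
      lie_h := by rw [neg_lie, heig, neg_smul]
      lie_e := hker }
  obtain ⟨n, hn⟩ := P.exists_nat
  refine ⟨-(n : ℤ), by simp, ?_⟩
  have : μ = -(n : K) := by linear_combination -hn
  simpa using this
end
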